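/- A function f: Z_2^n → {±1} satisfies ‖f‖_{U^k} = 1 if and only if f(x) = (-1)^{p(x)} for some polynomial p: Z_2^n → Z_2 of degree less than k. -/

import Mathlib

/-!
Write `f = (-1)^g` with `g : 𝔽₂ⁿ → 𝔽₂`. The iterated multiplicative derivatives of `f` are
`(-1)` raised to the iterated forward differences of `g`, so the Gowers average, a mean of
`±1`'s, equals `1` exactly when every `k`-fold difference of `g` vanishes. Each difference
lowers the degree of a sum of squarefree monomials, so a polynomial of degree `< k` is killed
by `k` of them. Conversely, the coefficient of `∏_{i ∈ S} xᵢ` in the algebraic normal form of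
`g` (obtained by Möbius inversion over the Boolean cube) is the `|S|`-fold difference of `g`
at `0` along the unit vectors of `S`, hence vanishes once `|S| ≥ k`.
-/

open Finset

/-- The multiplicative difference operator `Δ_h f(x) = f(x+h) · f(x)` for real
(±1-valued) functions. -/
def mulDiff {n : ℕ} (h : Fin n → ZMod 2)
    (f : (Fin n → ZMod 2) → ℝ) : (Fin n → ZMod 2) → ℝ :=
  fun x => f (x + h) * f x

/-- The `2^k`-th power of the Gowers `U^k` norm of a ±1-valued function `f`:
`E_{x,h_1,…,h_k} Δ_{h_1} ⋯ Δ_{h_k} f(x)`. -/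
noncomputable def gowersPow {n : ℕ} (k : ℕ) (f : (Fin n → ZMod 2) → ℝ) : ℝ :=
  ((2 : ℝ) ^ (n * (k + 1)))⁻¹ *
    ∑ hs : Fin k → (Fin n → ZMod 2), ∑ x : Fin n → ZMod 2,
      ((List.ofFn hs).foldr mulDiff f) x

open MvPolynomial

lemma ZMod.eq_zero_or_eq_one (a : ZMod 2) : a = 0 ∨ a = 1 := by
  revert a; decide

section IteratedFwdDiff

variable {G : Type*} [AddCommMonoid G]

lemma foldr_fwdDiff_zero {M : Type*} [AddCommGroup M] (l : List G) :
    l.foldr fwdDiff (0 : G → M) = 0 := by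
  induction l with
  | nil => rfl
  | cons h l ih => rw [List.foldr_cons, ih]; exact fwdDiff_const h 0

lemma foldr_fwdDiff_eq_zero_of_length_le {M : Type*} [AddCommGroup M] {k : ℕ} {g : G → M}
    (hg : ∀ hs : Fin k → G, (List.ofFn hs).foldr fwdDiff g = 0) {l : List G}
    (hl : k ≤ l.length) : l.foldr fwdDiff g = 0 := by
  have hlen : (l.drop (l.length - k)).length = k := by rw [List.length_drop]; omega
  obtain ⟨hs, hhs⟩ : ∃ hs : Fin k → G, List.ofFn hs = l.drop (l.length - k) := by
    generalize l.drop (l.length - k) = m at hlen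
    subst hlen
    exact ⟨_, List.ofFn_getElem⟩
  rw [← List.take_append_drop (l.length - k) l, List.foldr_append, ← hhs, hg,
    foldr_fwdDiff_zero]

lemma exists_foldr_fwdDiff_eq_sum_powerset {ι : Type*} [DecidableEq ι] (R : Type*) [Ring R]
    [CharP R 2] (v : ι → G) (S : Finset ι) :
    ∃ l : List G, l.length = S.card ∧
      ∀ (g : G → R) (x : G), l.foldr fwdDiff g x = ∑ T ∈ S.powerset, g (x + ∑ i ∈ T, v i) := by
  induction S using Finset.induction_on with
  | empty => exact ⟨[], rfl, fun g x => by simp⟩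
  | insert a S ha ih =>
    obtain ⟨l, hl, hsum⟩ := ih
    refine ⟨v a :: l, by simp [hl, ha], fun g x => ?_⟩
    rw [List.foldr_cons, fwdDiff, hsum, hsum, CharTwo.sub_eq_add, add_comm,
      sum_powerset_insert ha]
    congr 1
    refine sum_congr rfl fun T hT => ?_
    have haT : a ∉ T := fun h => ha (mem_powerset.1 hT h)
    rw [sum_insert haT, add_assoc]

end IteratedFwdDiff

section SquarefreeMonomialSpan

variable (R ι : Type*) [CommRing R]

def squarefreeMonomialSpan (d : ℕ) : Submodule R ((ι → R) → R) :=
  Submodule.span R {g | ∃ S : Finset ι, S.card < d ∧ g = fun x => ∏ i ∈ S, x i}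

lemma squarefreeMonomialSpan_zero : squarefreeMonomialSpan R ι 0 = ⊥ := by
  simp [squarefreeMonomialSpan]

lemma squarefreeMonomialSpan_mono : Monotone (squarefreeMonomialSpan R ι) :=
  fun _ _ hde => Submodule.span_mono fun _ ⟨S, hS, hg⟩ => ⟨S, hS.trans_le hde, hg⟩

variable {R ι}

lemma fwdDiff_prod [DecidableEq ι] (h : ι → R) (S : Finset ι) :
    fwdDiff h (fun x => ∏ i ∈ S, x i) =
      ∑ U ∈ S.powerset.erase ∅, (∏ i ∈ U, h i) • fun x => ∏ i ∈ S \ U, x i := by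
  funext x
  simp only [fwdDiff, Pi.add_apply, add_comm (x _), prod_add, Finset.sum_apply, Pi.smul_apply,
    smul_eq_mul, sum_erase_eq_sub (empty_mem_powerset S)]
  simp

lemma fwdDiff_mem_squarefreeMonomialSpan (h : ι → R) {d : ℕ} {g : (ι → R) → R}
    (hg : g ∈ squarefreeMonomialSpan R ι (d + 1)) : fwdDiff h g ∈ squarefreeMonomialSpan R ι d := by
  classical
  induction hg using Submodule.span_induction with
  | mem g hgen =>
    obtain ⟨S, hS, rfl⟩ := hgen
    rw [fwdDiff_prod]
    refine Submodule.sum_mem _ fun U hU => Submodule.smul_mem _ _ ?_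
    refine Submodule.subset_span ⟨S \ U, ?_, rfl⟩
    obtain ⟨hU, hUS⟩ := mem_erase.1 hU
    rw [card_sdiff_of_subset (mem_powerset.1 hUS)]
    have := card_pos.2 (nonempty_iff_ne_empty.2 hU)
    have := card_le_card (mem_powerset.1 hUS)
    omega
  | zero => exact (fwdDiff_const h (0 : R)).symm ▸ Submodule.zero_mem _
  | add a b _ _ ha hb => rw [fwdDiff_add]; exact Submodule.add_mem _ ha hb
  | smul c a _ ha => rw [fwdDiff_const_smul]; exact Submodule.smul_mem _ _ ha

lemma foldr_fwdDiff_mem_squarefreeMonomialSpan (l : List (ι → R)) {d : ℕ} {g : (ι → R) → R}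
    (hg : g ∈ squarefreeMonomialSpan R ι (d + l.length)) :
    l.foldr fwdDiff g ∈ squarefreeMonomialSpan R ι d := by
  induction l generalizing d with
  | nil => exact hg
  | cons h l ih =>
    refine fwdDiff_mem_squarefreeMonomialSpan h (ih ?_)
    rwa [List.length_cons, ← add_assoc, add_right_comm] at hg

lemma foldr_fwdDiff_eq_zero_of_mem {d : ℕ} {g : (ι → R) → R}
    (hg : g ∈ squarefreeMonomialSpan R ι d) {l : List (ι → R)} (hl : d ≤ l.length) :
    l.foldr fwdDiff g = 0 := by
  have := foldr_fwdDiff_mem_squarefreeMonomialSpan l (d := 0)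
    (squarefreeMonomialSpan_mono R ι (by omega) hg)
  rwa [squarefreeMonomialSpan_zero, Submodule.mem_bot] at this

lemma eval_mem_squarefreeMonomialSpan (p : MvPolynomial ι (ZMod 2)) :
    (fun x => eval x p) ∈ squarefreeMonomialSpan (ZMod 2) ι (p.totalDegree + 1) := by
  have hidem (a : ZMod 2) : IsIdempotentElem a := by
    rcases a.eq_zero_or_eq_one with rfl | rfl <;> rfl
  have heval :
      (fun x => eval x p) = ∑ m ∈ p.support, coeff m p • fun x => ∏ i ∈ m.support, x i := by
    funext x
    simp only [eval_eq, Finset.sum_apply, Pi.smul_apply, smul_eq_mul]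
    refine sum_congr rfl fun m _ => congrArg _ (prod_congr rfl fun i hi => ?_)
    obtain ⟨j, hj⟩ := Nat.exists_eq_succ_of_ne_zero (Finsupp.mem_support_iff.1 hi)
    rw [hj, (hidem _).pow_succ_eq]
  rw [heval]
  refine Submodule.sum_mem _ fun m hm =>
    Submodule.smul_mem _ _ (Submodule.subset_span ⟨m.support, ?_, rfl⟩)
  calc m.support.card = ∑ i ∈ m.support, 1 := card_eq_sum_ones _
    _ ≤ m.sum fun _ e => e :=
      sum_le_sum fun i hi => Nat.one_le_iff_ne_zero.2 (Finsupp.mem_support_iff.1 hi)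
    _ < p.totalDegree + 1 := Nat.lt_succ_of_le (le_totalDegree hm)

end SquarefreeMonomialSpan

section AlgebraicNormalForm

lemma sum_powerset_sum_powerset_of_charTwo {ι R : Type*} [DecidableEq ι] [Ring R] [CharP R 2]
    (φ : Finset ι → R) (U : Finset ι) : ∑ S ∈ U.powerset, ∑ T ∈ S.powerset, φ T = φ U := by
  induction U using Finset.induction_on generalizing φ with
  | empty => simp
  | insert a U ha ih =>
    have hsplit : ∀ S ∈ U.powerset, ∑ T ∈ (insert a S).powerset, φ T =
        ∑ T ∈ S.powerset, φ T + ∑ T ∈ S.powerset, φ (insert a T) :=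
      fun S hS => sum_powerset_insert (fun h => ha (mem_powerset.1 hS h)) φ
    rw [sum_powerset_insert ha, sum_congr rfl hsplit, sum_add_distrib, ih, ih, ← add_assoc,
      CharTwo.add_self_eq_zero, zero_add]

variable {ι : Type*} [DecidableEq ι]

def anfCoeff (g : (ι → ZMod 2) → ZMod 2) (S : Finset ι) : ZMod 2 :=
  ∑ T ∈ S.powerset, g (∑ i ∈ T, Pi.single i 1)

lemma anfCoeff_eq_zero {k : ℕ} {g : (ι → ZMod 2) → ZMod 2}
    (hg : ∀ hs : Fin k → (ι → ZMod 2), (List.ofFn hs).foldr fwdDiff g = 0) {S : Finset ι}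
    (hS : k ≤ S.card) : anfCoeff g S = 0 := by
  obtain ⟨l, hl, hsum⟩ := exists_foldr_fwdDiff_eq_sum_powerset (ZMod 2) (Pi.single · (1 : ZMod 2)) S
  have := hsum g 0
  simp only [zero_add] at this
  rw [anfCoeff, ← this, foldr_fwdDiff_eq_zero_of_length_le hg (hl ▸ hS), Pi.zero_apply]

variable [Fintype ι]

noncomputable def anf (g : (ι → ZMod 2) → ZMod 2) : MvPolynomial ι (ZMod 2) :=
  ∑ S : Finset ι, anfCoeff g S • ∏ i ∈ S, X i

lemma eval_anf (g : (ι → ZMod 2) → ZMod 2) (x : ι → ZMod 2) : eval x (anf g) = g x := by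
  set U := univ.filter fun i => x i = 1
  have hx : x = ∑ i ∈ U, Pi.single i 1 := by
    funext i
    simp only [Finset.sum_apply, sum_pi_single, U, mem_filter, mem_univ, true_and]
    rcases (x i).eq_zero_or_eq_one with h | h <;> simp [h]
  have hterm (S : Finset ι) :
      eval x (anfCoeff g S • ∏ i ∈ S, X i) = if S ⊆ U then anfCoeff g S else 0 := by
    rw [smul_eval, map_prod]
    simp [hx, prod_boole, subset_iff]
  have hpowerset : univ.filter (· ⊆ U) = U.powerset := by ext; simp
  rw [anf, map_sum, sum_congr rfl fun S _ => hterm S, sum_ite, sum_const_zero, add_zero,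
    hpowerset]
  conv_rhs => rw [hx]
  exact sum_powerset_sum_powerset_of_charTwo _ U

lemma totalDegree_anf_lt {k : ℕ} (hk : 1 ≤ k) {g : (ι → ZMod 2) → ZMod 2}
    (hg : ∀ S : Finset ι, k ≤ S.card → anfCoeff g S = 0) : (anf g).totalDegree < k := by
  suffices (anf g).totalDegree ≤ k - 1 by omega
  refine totalDegree_finsetSum_le fun S _ => ?_
  by_cases hS : anfCoeff g S = 0
  · simp [hS]
  refine (totalDegree_smul_le _ _).trans ((totalDegree_finsetProd _ _).trans ?_)
  have := mt (hg S) hS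
  simp only [totalDegree_X, sum_const, smul_eq_mul, mul_one]
  omega

end AlgebraicNormalForm

section Gowers

variable {n : ℕ}

lemma gowersPow_eq_one_iff_of_le_one {k : ℕ} {f : (Fin n → ZMod 2) → ℝ}
    (hle : ∀ (hs : Fin k → (Fin n → ZMod 2)) x, (List.ofFn hs).foldr mulDiff f x ≤ 1) :
    gowersPow k f = 1 ↔
      ∀ (hs : Fin k → (Fin n → ZMod 2)) x, (List.ofFn hs).foldr mulDiff f x = 1 := by
  have hcount : (2 : ℝ) ^ (n * (k + 1)) =
      ∑ _hs : Fin k → (Fin n → ZMod 2), ∑ _x : Fin n → ZMod 2, (1 : ℝ) := by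
    simp [pow_mul, pow_succ]
  rw [gowersPow, inv_mul_eq_one₀ (by positivity), hcount, eq_comm,
    sum_eq_sum_iff_of_le fun hs _ => sum_le_sum fun x _ => hle hs x]
  simp_rw [sum_eq_sum_iff_of_le fun x _ => hle _ x]
  simp [eq_comm]

noncomputable def signChar : AddChar (ZMod 2) ℝ :=
  AddChar.zmodChar 2 (ζ := -1) (by norm_num)

lemma signChar_apply (a : ZMod 2) : signChar a = (-1) ^ a.val :=
  AddChar.zmodChar_apply _ a

@[simp] lemma signChar_zero : signChar 0 = 1 := AddChar.map_zero_eq_one _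

@[simp] lemma signChar_one : signChar 1 = -1 := by
  rw [signChar_apply, ZMod.val_one, pow_one]

lemma signChar_le_one (a : ZMod 2) : signChar a ≤ 1 := by
  rcases a.eq_zero_or_eq_one with rfl | rfl <;> norm_num

lemma signChar_eq_one_iff {a : ZMod 2} : signChar a = 1 ↔ a = 0 := by
  rcases a.eq_zero_or_eq_one with rfl | rfl <;> norm_num

lemma signChar_injective : Function.Injective signChar := by
  intro a b
  rcases a.eq_zero_or_eq_one with rfl | rfl <;>
    rcases b.eq_zero_or_eq_one with rfl | rfl <;> norm_num

lemma exists_signChar_eq {y : ℝ} (hy : y = 1 ∨ y = -1) : ∃ a, signChar a = y := by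
  rcases hy with rfl | rfl
  exacts [⟨0, signChar_zero⟩, ⟨1, signChar_one⟩]

lemma foldr_mulDiff_signChar (g : (Fin n → ZMod 2) → ZMod 2) (l : List (Fin n → ZMod 2)) :
    l.foldr mulDiff (fun x => signChar (g x)) = fun x => signChar (l.foldr fwdDiff g x) := by
  induction l with
  | nil => rfl
  | cons h l ih =>
    funext x
    simp only [List.foldr_cons, ih, mulDiff, fwdDiff, CharTwo.sub_eq_add, AddChar.map_add_eq_mul]

lemma gowersPow_signChar_eq_one_iff {k : ℕ} (g : (Fin n → ZMod 2) → ZMod 2) :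
    gowersPow k (fun x => signChar (g x)) = 1 ↔
      ∀ hs : Fin k → (Fin n → ZMod 2), (List.ofFn hs).foldr fwdDiff g = 0 := by
  rw [gowersPow_eq_one_iff_of_le_one fun hs x => by
    rw [foldr_mulDiff_signChar]; exact signChar_le_one _]
  simp only [foldr_mulDiff_signChar, signChar_eq_one_iff, funext_iff, Pi.zero_apply]

end Gowers

/-- A `±1`-valued function has Gowers `U^k` norm equal to `1` if and only if it is a
phase polynomial of degree less than `k`, i.e. `f(x) = (-1)^(p(x))` for some
polynomial `p` over `Z_2` of total degree `< k`. -/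
theorem gowers_norm_eq_one_iff_phase_polynomial (n k : ℕ) (hk : 1 ≤ k)
    (f : (Fin n → ZMod 2) → ℝ) (hf : ∀ x, f x = 1 ∨ f x = -1) :
    gowersPow k f = 1 ↔
      ∃ p : MvPolynomial (Fin n) (ZMod 2), p.totalDegree < k ∧
        ∀ x, f x = (-1 : ℝ) ^ ((MvPolynomial.eval x p).val) := by
  choose g hg using fun x => exists_signChar_eq (hf x)
  obtain rfl : f = fun x => signChar (g x) := funext fun x => (hg x).symm
  rw [gowersPow_signChar_eq_one_iff]
  constructor
  · intro hvanish
    refine ⟨anf g, totalDegree_anf_lt hk fun S => anfCoeff_eq_zero hvanish, fun x => ?_⟩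
    rw [eval_anf]
    exact signChar_apply (g x)
  · rintro ⟨p, hdeg, hp⟩ hs
    obtain rfl : g = fun x => eval x p :=
      funext fun x => signChar_injective ((hp x).trans (signChar_apply _).symm)
    exact foldr_fwdDiff_eq_zero_of_mem (eval_mem_squarefreeMonomialSpan p) (by simpa using hdeg)
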